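/- arXiv:math/9805151 — 2 statements merged into one kernel-verified Lean document; each statement's English description precedes it below -/
import Mathlib

section
/- Let T be a compact metric space with distance function d, let T₀ ⊆ T be countable, and let g : ℝ → T be a function with range contained in T₀ such that for every x ∈ ℝ there exists δ > 0 for which the set {s ∈ ℝ : d(g(x - s), g(x + s)) < δ} is finite. Let h : T → ℝ be a topological embedding (a continuous injective map that is a homeomorphism onto its image). Then the composition f = h ∘ g : ℝ → ℝ has countable bounded range, and for every x ∈ ℝ there exists ε > 0 such that the set {s ∈ ℝ : |f(x - s) - f(x + s)| < ε} is finite. -/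
/-- If `T` is a compact metric space, `T₀ ⊆ T` is countable, `g : ℝ → T` has range
contained in `T₀` and for every `x` there is `δ > 0` with
`{s : dist (g (x - s)) (g (x + s)) < δ}` finite, and `h : T → ℝ` is a topological
embedding, then `f = h ∘ g` has countable bounded range and for every `x` there is
`ε > 0` with `{s : |f (x - s) - f (x + s)| < ε}` finite. -/
theorem comp_embedding_of_finite_symmetric_sets {T : Type*} [MetricSpace T] [CompactSpace T]
    (T₀ : Set T) (hT₀ : T₀.Countable) (g : ℝ → T) (hg : Set.range g ⊆ T₀)
    (hfin : ∀ x : ℝ, ∃ δ : ℝ, 0 < δ ∧ {s : ℝ | dist (g (x - s)) (g (x + s)) < δ}.Finite)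
    (h : T → ℝ) (hemb : Topology.IsEmbedding h) :
    (Set.range (h ∘ g)).Countable ∧ Bornology.IsBounded (Set.range (h ∘ g)) ∧
      ∀ x : ℝ, ∃ ε : ℝ, 0 < ε ∧
        {s : ℝ | |(h ∘ g) (x - s) - (h ∘ g) (x + s)| < ε}.Finite := by
  refine ⟨?_, ?_, ?_⟩
  · have : Set.range (h ∘ g) ⊆ h '' T₀ := by
      rintro y ⟨x, rfl⟩
      exact ⟨g x, hg ⟨x, rfl⟩, rfl⟩
    exact ((hT₀.image h).mono this)
  · have hc : IsCompact (Set.range h) := isCompact_range hemb.continuous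
    exact hc.isBounded.subset (by
      rintro y ⟨x, rfl⟩; exact ⟨g x, rfl⟩)
  · intro x
    obtain ⟨δ, hδ, hδfin⟩ := hfin x
    -- inverse of embedding is uniformly continuous on compact range
    have hc : IsCompact (Set.range h) := isCompact_range hemb.continuous
    haveI : CompactSpace (Set.range h) := isCompact_iff_compactSpace.mp hc
    set e : T ≃ₜ Set.range h := hemb.toHomeomorph
    have huc : UniformContinuous e.symm :=
      CompactSpace.uniformContinuous_of_continuous e.symm.continuous
    rw [Metric.uniformContinuous_iff] at huc
    obtain ⟨ε, hε, hkey⟩ := huc δ hδ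
    refine ⟨ε, hε, hδfin.subset ?_⟩
    intro s hs
    simp only [Set.mem_setOf_eq, Function.comp_apply] at hs ⊢
    have h1 : dist ((⟨h (g (x - s)), ⟨_, rfl⟩⟩ : Set.range h)) ⟨h (g (x + s)), ⟨_, rfl⟩⟩ < ε := by
      simpa [Subtype.dist_eq, Real.dist_eq] using hs
    have := hkey h1
    have he : ∀ t : T, e.symm ⟨h t, ⟨t, rfl⟩⟩ = t := fun t => e.symm_apply_apply t
    simpa [he] using this
end

section
/- There exist a compact metrizable topological space T with a compatible metric d, a countable subset T₀ ⊆ T, and a function g : ℝ → T with range contained in T₀, such that for every x ∈ ℝ there exists δ > 0 for which the set {s ∈ ℝ : d(g(x - s), g(x + s)) < δ} is finite. -/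
/-!
Expand reals in a Hamel basis over `ℚ` whose index set is coded injectively by binary sequences.
With `u` the coefficients of `x - s` and `y` those of `2x`, the coefficients of `x + s` are
`y - u`. Level `i` of `g` records, for each binary word `σ` of length `i`, the signs of
`u a - q` for `q` among the first `i + 1` rationals, at the least and the greatest `a` in the
support of `u` whose code starts with `σ`; above a cutoff `level u` it records nothing, so the
range of `g` is countable.

If `g (x - s)` and `g (x + s)` agree up to `level y`, every coefficient `u a` is `0`, `y a / 2`
or `y a`, which leaves finitely many `s`. When `level u ≤ level y`, at level `level u - 1` all
blocks are singletons and the grids pin the coefficients down. Otherwise, at level `level y`,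
an `a` outside the support of `y` has opposite coefficients in `u` and `y - u`; the signs at `0`
of the extreme elements detect such an `a` unless the block is a single element of the support
of `y`, and then the sign at `y a / 2` forces `u a = y a / 2`.
-/

theorem eq_zero_of_sign_eq_sign_neg {α : Type*} [AddGroup α] [LinearOrder α]
    [AddLeftStrictMono α] {a : α} (h : SignType.sign a = SignType.sign (-a)) : a = 0 := by
  rw [Left.sign_neg] at h
  have : ∀ s : SignType, s = -s → s = 0 := by decide
  exact sign_eq_zero_iff.mp (this _ h)

theorem Finset.exists_eq_singleton_of_min'_max' {α : Type*} [LinearOrder α] {X Y : Finset α}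
    (hX : X.Nonempty) (hY : Y.Nonempty) {p : α → Prop}
    (hbad : ∀ x, ¬ p x → (x ∈ X ↔ x ∈ Y))
    (hgood : ∀ x ∈ X ∪ Y, ∀ x' ∈ X ∪ Y, p x → p x' → x = x')
    (hmin : X.min' hX = Y.min' hY → p (X.min' hX))
    (hmax : X.max' hX = Y.max' hY → p (X.max' hX)) :
    ∃ z, p z ∧ X = {z} ∧ Y = {z} := by
  have hZ : (X ∪ Y).Nonempty := hX.mono subset_union_left
  have mem_both : ∀ z ∈ X ∪ Y, ¬ p z → z ∈ X ∧ z ∈ Y := fun z hz hn => by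
    rcases mem_union.mp hz with h | h
    exacts [⟨h, (hbad z hn).mp h⟩, ⟨(hbad z hn).mpr h, h⟩]
  have hpmin : p ((X ∪ Y).min' hZ) := by
    by_contra hn
    obtain ⟨hzX, hzY⟩ := mem_both _ (min'_mem _ hZ) hn
    have hXz : X.min' hX = (X ∪ Y).min' hZ :=
      le_antisymm (min'_le _ _ hzX) ((min'_union hX hY).trans_le (min_le_left _ _))
    have hYz : Y.min' hY = (X ∪ Y).min' hZ :=
      le_antisymm (min'_le _ _ hzY) ((min'_union hX hY).trans_le (min_le_right _ _))
    exact hn (hXz ▸ hmin (hXz.trans hYz.symm))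
  have hpmax : p ((X ∪ Y).max' hZ) := by
    by_contra hn
    obtain ⟨hzX, hzY⟩ := mem_both _ (max'_mem _ hZ) hn
    have hXz : X.max' hX = (X ∪ Y).max' hZ :=
      le_antisymm ((le_max_left _ _).trans_eq (max'_union hX hY).symm) (le_max' _ _ hzX)
    have hYz : Y.max' hY = (X ∪ Y).max' hZ :=
      le_antisymm ((le_max_right _ _).trans_eq (max'_union hX hY).symm) (le_max' _ _ hzY)
    exact hn (hXz ▸ hmax (hXz.trans hYz.symm))
  have hsingle : X ∪ Y = {(X ∪ Y).min' hZ} := by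
    refine eq_singleton_iff_unique_mem.mpr ⟨min'_mem _ hZ, fun x hx => le_antisymm ?_ ?_⟩
    · exact (le_max' _ _ hx).trans_eq
        (hgood _ (max'_mem _ hZ) _ (min'_mem _ hZ) hpmax hpmin)
    · exact min'_le _ _ hx
  refine ⟨_, hpmin, ?_, ?_⟩
  · exact (subset_singleton_iff.mp (hsingle ▸ subset_union_left)).resolve_left hX.ne_empty
  · exact (subset_singleton_iff.mp (hsingle ▸ subset_union_right)).resolve_left hY.ne_empty

theorem Finsupp.finite_setOf_forall_apply_mem {ι M : Type*} [Zero M] (s : Finset ι)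
    (t : ι → Set M) (ht : ∀ a, (t a).Finite) (hs : ∀ a ∉ s, t a ⊆ {0}) :
    {u : ι →₀ M | ∀ a, u a ∈ t a}.Finite := by
  refine Set.Finite.of_finite_image (f := fun u (a : s) => u a) ?_ ?_
  · refine (Set.Finite.pi (t := fun a : s => t a) fun a => ht a).subset ?_
    rintro _ ⟨u, hu, rfl⟩ a -
    exact hu a
  · intro u hu v hv huv
    ext a
    by_cases ha : a ∈ s
    · exact congrFun huv ⟨a, ha⟩
    · rw [hs a ha (hu a), hs a ha (hv a)]

theorem PiNat.exists_compactSpace_metricSpace {E : ℕ → Type} [∀ n, Finite (E n)] :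
    ∃ m : MetricSpace (∀ n, E n), @CompactSpace _ m.toUniformSpace.toTopologicalSpace ∧
      ∀ x y : ∀ n, E n, ∀ n, @dist _ m.toDist x y < (1 / 2) ^ n → ∀ i ≤ n, x i = y i := by
  let _ : ∀ n, UniformSpace (E n) := fun _ => ⊥
  have : ∀ n, DiscreteTopology (E n) := fun _ => ⟨rfl⟩
  let m : MetricSpace (∀ n, E n) := PiNat.metricSpaceOfDiscreteUniformity fun _ => rfl
  exact ⟨m, Pi.compactSpace, fun _ _ _ h _ hi => PiNat.apply_eq_of_dist_lt h hi⟩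

theorem Set.countable_setOf_eventually_eq {E : ℕ → Type*} [∀ n, Finite (E n)] (b : ∀ n, E n) :
    {x : ∀ n, E n | ∀ᶠ n in Filter.atTop, x n = b n}.Countable := by
  simp only [Filter.eventually_atTop, Set.ofPred_exists]
  refine Set.countable_iUnion fun N => Set.Finite.countable ?_
  refine Set.Finite.of_finite_image (f := fun x (i : Fin N) => x i) (Set.toFinite _) ?_
  intro x hx y hy hxy
  funext n
  by_cases hn : n < N
  · exact congrFun hxy ⟨n, hn⟩
  · rw [hx n (not_lt.mp hn), hy n (not_lt.mp hn)]

theorem Real.exists_injective_nat_bool : ∃ c : ℝ → ℕ → Bool, Function.Injective c := by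
  have : Cardinal.mk ℝ ≤ Cardinal.mk (ℕ → Bool) := by
    rw [Cardinal.mk_real, ← Cardinal.power_def, Cardinal.mk_bool, Cardinal.mk_nat,
      Cardinal.two_power_aleph0]
  obtain ⟨e⟩ := Cardinal.le_def _ _ |>.mp this
  exact ⟨e, e.injective⟩

noncomputable section

namespace SymmetricCode

abbrev Grid (i : ℕ) : Type := Fin (i + 1) → SignType

abbrev Layer (i : ℕ) : Type := (Fin i → Bool) → Option (Grid i × Grid i)

def signGrid (i : ℕ) (r : ℚ) : Grid i := fun m => SignType.sign (r - (Denumerable.eqv ℚ).symm m)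

theorem sign_sub_eq_of_signGrid_eq {i : ℕ} {r r' q : ℚ} (h : signGrid i r = signGrid i r')
    (hq : Denumerable.eqv ℚ q ≤ i) : SignType.sign (r - q) = SignType.sign (r' - q) := by
  have := congrFun h ⟨Denumerable.eqv ℚ q, Nat.lt_succ_of_le hq⟩
  rwa [signGrid, signGrid, Fin.val_mk, Equiv.symm_apply_apply] at this

variable {ι : Type*} (c : ι → ℕ → Bool)

theorem ne_zero_of_signGrid_eq {y u : ι →₀ ℚ} {i : ℕ} {t : ι} (h0 : Denumerable.eqv ℚ 0 ≤ i)
    (ht : u t ≠ 0) (h : signGrid i (u t) = signGrid i ((y - u) t)) : y t ≠ 0 := by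
  intro hy
  have := sign_sub_eq_of_signGrid_eq h h0
  rw [Finsupp.sub_apply, hy, zero_sub, sub_zero, sub_zero] at this
  exact ht (eq_zero_of_sign_eq_sign_neg this)

def codePrefix (i : ℕ) (a : ι) : Fin i → Bool := fun j => c a j

def block (u : ι →₀ ℚ) (i : ℕ) (σ : Fin i → Bool) : Finset ι :=
  u.support.filter (codePrefix c i · = σ)

theorem mem_block {u : ι →₀ ℚ} {i : ℕ} {σ : Fin i → Bool} {a : ι} :
    a ∈ block c u i σ ↔ u a ≠ 0 ∧ codePrefix c i a = σ := by
  simp [block]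

def sepLevel (u : ι →₀ ℚ) : ℕ :=
  (u.support ×ˢ u.support).sup fun p => PiNat.firstDiff (c p.1) (c p.2) + 1

variable {c}

theorem eq_of_codePrefix_eq (hc : Function.Injective c) {u : ι →₀ ℚ} {a b : ι}
    (ha : a ∈ u.support) (hb : b ∈ u.support) {i : ℕ} (hi : sepLevel c u ≤ i)
    (h : codePrefix c i a = codePrefix c i b) : a = b := by
  by_contra hab
  have hlt : PiNat.firstDiff (c a) (c b) < i :=
    (Finset.le_sup (f := fun p : ι × ι => PiNat.firstDiff (c p.1) (c p.2) + 1)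
      (b := (a, b)) (Finset.mem_product.mpr ⟨ha, hb⟩)).trans hi
  exact PiNat.apply_firstDiff_ne (hc.ne hab) (congrFun h ⟨_, hlt⟩)

theorem block_eq_singleton (hc : Function.Injective c) {u : ι →₀ ℚ} {i : ℕ}
    (hi : sepLevel c u ≤ i) {σ : Fin i → Bool} {a : ι} (ha : a ∈ block c u i σ) :
    block c u i σ = {a} := by
  refine Finset.eq_singleton_iff_unique_mem.mpr ⟨ha, fun b hb => ?_⟩
  simp only [block, Finset.mem_filter] at ha hb
  exact eq_of_codePrefix_eq hc hb.1 ha.1 hi (hb.2.trans ha.2.symm)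

variable (c)

/-- Past `sepLevel c u` the blocks of `u` are singletons, and the grids see `0`, `u a`
and `u a / 2`. -/
def level (u : ι →₀ ℚ) : ℕ :=
  sepLevel c u + u.support.sup (fun a => Denumerable.eqv ℚ (u a) + Denumerable.eqv ℚ (u a / 2)) +
    Denumerable.eqv ℚ 0 + 1

theorem sepLevel_lt_level (u : ι →₀ ℚ) : sepLevel c u < level c u := by
  unfold level; omega

theorem eqv_zero_lt_level (u : ι →₀ ℚ) : Denumerable.eqv ℚ 0 < level c u := by
  unfold level; omega

theorem eqv_apply_lt_level {u : ι →₀ ℚ} {a : ι} (ha : a ∈ u.support) :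
    Denumerable.eqv ℚ (u a) < level c u ∧ Denumerable.eqv ℚ (u a / 2) < level c u := by
  have := Finset.le_sup (f := fun a => Denumerable.eqv ℚ (u a) + Denumerable.eqv ℚ (u a / 2)) ha
  unfold level
  constructor <;> omega

variable [LinearOrder ι]

def blockData (u : ι →₀ ℚ) (i : ℕ) (σ : Fin i → Bool) : Option (Grid i × Grid i) :=
  if h : (block c u i σ).Nonempty then
    some (signGrid i (u ((block c u i σ).min' h)), signGrid i (u ((block c u i σ).max' h)))
  else none

variable {c}

theorem blockData_of_nonempty {u : ι →₀ ℚ} {i : ℕ} {σ : Fin i → Bool}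
    (h : (block c u i σ).Nonempty) :
    blockData c u i σ =
      some (signGrid i (u ((block c u i σ).min' h)), signGrid i (u ((block c u i σ).max' h))) :=
  dif_pos h

theorem blockData_of_eq_singleton {u : ι →₀ ℚ} {i : ℕ} {σ : Fin i → Bool} {a : ι}
    (h : block c u i σ = {a}) : blockData c u i σ = some (signGrid i (u a), signGrid i (u a)) := by
  rw [blockData_of_nonempty (h ▸ Finset.singleton_nonempty a)]
  simp only [h, Finset.min'_singleton, Finset.max'_singleton]

theorem nonempty_of_blockData_eq {u v : ι →₀ ℚ} {i : ℕ} {σ : Fin i → Bool}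
    (hu : (block c u i σ).Nonempty) (h : blockData c u i σ = blockData c v i σ) :
    (block c v i σ).Nonempty := by
  by_contra hv
  rw [blockData_of_nonempty hu, blockData, dif_neg hv] at h
  exact Option.some_ne_none _ h

theorem apply_eq_half_of_blockData_eq (hc : Function.Injective c) {y u : ι →₀ ℚ} {i : ℕ}
    (hy : sepLevel c y ≤ i) (h0 : Denumerable.eqv ℚ 0 ≤ i)
    (hhalf : ∀ b ∈ y.support, Denumerable.eqv ℚ (y b / 2) ≤ i) {a : ι} (ha : a ∈ u.support)
    (h : blockData c u i (codePrefix c i a) = blockData c (y - u) i (codePrefix c i a)) :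
    u a = y a / 2 := by
  set σ := codePrefix c i a
  have haX : a ∈ block c u i σ := (mem_block c).mpr ⟨Finsupp.mem_support_iff.mp ha, rfl⟩
  have hX : (block c u i σ).Nonempty := ⟨a, haX⟩
  have hY := nonempty_of_blockData_eq hX h
  have hbad : ∀ x, x ∉ y.support → (x ∈ block c u i σ ↔ x ∈ block c (y - u) i σ) :=
    fun x hx => by simp [mem_block, Finsupp.notMem_support_iff.mp hx]
  have hgood : ∀ x ∈ block c u i σ ∪ block c (y - u) i σ,
      ∀ x' ∈ block c u i σ ∪ block c (y - u) i σ, x ∈ y.support → x' ∈ y.support → x = x' := by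
    intro x hx x' hx' hxy hx'y
    simp only [Finset.mem_union, mem_block] at hx hx'
    exact eq_of_codePrefix_eq hc hxy hx'y hy
      ((hx.elim (·.2) (·.2)).trans (hx'.elim (·.2) (·.2)).symm)
  rw [blockData_of_nonempty hX, blockData_of_nonempty hY, Option.some.injEq, Prod.mk.injEq] at h
  have hmin : (block c u i σ).min' hX = (block c (y - u) i σ).min' hY →
      (block c u i σ).min' hX ∈ y.support := fun hmin =>
    Finsupp.mem_support_iff.mpr <| ne_zero_of_signGrid_eq h0
      ((mem_block c).mp (Finset.min'_mem _ hX)).1 (hmin ▸ h.1)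
  have hmax : (block c u i σ).max' hX = (block c (y - u) i σ).max' hY →
      (block c u i σ).max' hX ∈ y.support := fun hmax =>
    Finsupp.mem_support_iff.mpr <| ne_zero_of_signGrid_eq h0
      ((mem_block c).mp (Finset.max'_mem _ hX)).1 (hmax ▸ h.2)
  obtain ⟨z, hzy, hXz, hYz⟩ := Finset.exists_eq_singleton_of_min'_max' hX hY hbad hgood hmin hmax
  obtain rfl : a = z := Finset.mem_singleton.mp (hXz ▸ haX)
  have := sign_sub_eq_of_signGrid_eq (by simpa only [hXz, hYz, Finset.min'_singleton] using h.1)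
    (hhalf a hzy)
  rw [Finsupp.sub_apply, show y a - u a - y a / 2 = -(u a - y a / 2) by ring] at this
  linarith [eq_zero_of_sign_eq_sign_neg this]

theorem apply_eq_half_or_eq_of_blockData_eq (hc : Function.Injective c) {y u : ι →₀ ℚ} {i : ℕ}
    (hu : sepLevel c u ≤ i) (hv : sepLevel c (y - u) ≤ i) {a : ι} (ha : a ∈ u.support)
    (hi : Denumerable.eqv ℚ (u a) ≤ i)
    (h : blockData c u i (codePrefix c i a) = blockData c (y - u) i (codePrefix c i a)) :
    u a = y a / 2 ∨ u a = y a := by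
  by_cases hav : a ∈ (y - u).support
  · have hblock : ∀ w : ι →₀ ℚ, sepLevel c w ≤ i → a ∈ w.support →
        block c w i (codePrefix c i a) = {a} := fun w hw haw =>
      block_eq_singleton hc hw ((mem_block c).mpr ⟨Finsupp.mem_support_iff.mp haw, rfl⟩)
    rw [blockData_of_eq_singleton (hblock u hu ha),
      blockData_of_eq_singleton (hblock _ hv hav)] at h
    have := sign_sub_eq_of_signGrid_eq (congrArg Prod.fst (Option.some.inj h)) hi
    rw [sub_self, sign_zero, eq_comm, sign_eq_zero_iff, Finsupp.sub_apply] at this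
    left; linarith
  · rw [Finsupp.notMem_support_iff, Finsupp.sub_apply, sub_eq_zero] at hav
    exact Or.inr hav.symm

variable (c)

def code (u : ι →₀ ℚ) (i : ℕ) : Layer i :=
  if i < level c u then blockData c u i else fun _ => none

variable {c}

theorem code_of_lt {u : ι →₀ ℚ} {i : ℕ} (hi : i < level c u) : code c u i = blockData c u i :=
  if_pos hi

theorem code_of_le {u : ι →₀ ℚ} {i : ℕ} (hi : level c u ≤ i) : code c u i = fun _ => none :=
  if_neg (not_lt.mpr hi)

theorem code_ne_none {u : ι →₀ ℚ} (hu : u ≠ 0) {i : ℕ} (hi : i < level c u) :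
    code c u i ≠ fun _ => none := by
  obtain ⟨a, ha⟩ := Finsupp.support_nonempty_iff.mpr hu
  intro h
  have hX : (block c u i (codePrefix c i a)).Nonempty :=
    ⟨a, (mem_block c).mpr ⟨Finsupp.mem_support_iff.mp ha, rfl⟩⟩
  have := congrFun h (codePrefix c i a)
  rw [code_of_lt hi, blockData_of_nonempty hX] at this
  exact Option.some_ne_none _ this

theorem min_level_eq_of_code_eq {u v : ι →₀ ℚ} (hu : u ≠ 0) (hv : v ≠ 0) {n : ℕ}
    (h : ∀ i ≤ n, code c u i = code c v i) : min (level c u) (n + 1) = min (level c v) (n + 1) := by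
  have hlt : ∀ i ≤ n, i < level c u ↔ i < level c v := fun i hi => by
    constructor
    · exact fun hiu => by_contra fun hiv =>
        code_ne_none hu hiu (h i hi ▸ code_of_le (not_lt.mp hiv))
    · exact fun hiv => by_contra fun hiu =>
        code_ne_none hv hiv ((h i hi).symm ▸ code_of_le (not_lt.mp hiu))
  have := hlt (level c u)
  have := hlt (level c v)
  omega

theorem eventually_code_eq_none (u : ι →₀ ℚ) : ∀ᶠ i in Filter.atTop, code c u i = fun _ => none :=
  Filter.eventually_atTop.mpr ⟨level c u, fun _ => code_of_le⟩

theorem apply_mem_of_code_eq (hc : Function.Injective c) {y u : ι →₀ ℚ}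
    (h : ∀ i ≤ level c y, code c u i = code c (y - u) i) (a : ι) :
    u a ∈ ({0, y a / 2, y a} : Set ℚ) := by
  by_cases ha : a ∈ u.support
  swap
  · exact Or.inl (Finsupp.notMem_support_iff.mp ha)
  by_cases hv : y - u = 0
  · simp [sub_eq_zero.mp hv]
  have hu : u ≠ 0 := Finsupp.support_nonempty_iff.mp ⟨a, ha⟩
  have hmin := min_level_eq_of_code_eq hu hv h
  have blockData_eq : ∀ i ≤ level c y, i < level c u → i < level c (y - u) →
      blockData c u i (codePrefix c i a) = blockData c (y - u) i (codePrefix c i a) :=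
    fun i hi hiu hiv => by rw [← code_of_lt hiu, ← code_of_lt hiv, h i hi]
  right
  by_cases hlevel : level c u ≤ level c y
  · have hsep := sepLevel_lt_level c u
    have hsep' := sepLevel_lt_level c (y - u)
    have henc := (eqv_apply_lt_level c ha).1
    exact apply_eq_half_or_eq_of_blockData_eq hc (i := level c u - 1) (by omega) (by omega) ha
      (by omega) (blockData_eq _ (by omega) (by omega) (by omega))
  · have hsep := sepLevel_lt_level c y
    have h0 := eqv_zero_lt_level c y
    left
    exact apply_eq_half_of_blockData_eq hc hsep.le h0.le
      (fun b hb => (eqv_apply_lt_level c hb).2.le) ha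
      (blockData_eq _ le_rfl (by omega) (by omega))

theorem finite_setOf_code_eq (hc : Function.Injective c) (y : ι →₀ ℚ) :
    {u | ∀ i ≤ level c y, code c u i = code c (y - u) i}.Finite := by
  refine (Finsupp.finite_setOf_forall_apply_mem y.support (fun a => {0, y a / 2, y a})
    (fun a => Set.toFinite _) fun a ha => ?_).subset fun u hu => apply_mem_of_code_eq hc hu
  simp [Finsupp.notMem_support_iff.mp ha]

end SymmetricCode

end

open SymmetricCode in
/-- There exist a compact metric space `T`, a countable subset `T₀ ⊆ T`, and a
function `g : ℝ → T` with range contained in `T₀`, such that for every `x ∈ ℝ`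
there exists `δ > 0` for which `{s : dist (g (x - s)) (g (x + s)) < δ}` is finite. -/
theorem exists_compact_metric_valued_function_with_finite_symmetric_sets :
    ∃ (T : Type) (m : MetricSpace T) (T₀ : Set T) (g : ℝ → T),
      @CompactSpace T m.toUniformSpace.toTopologicalSpace ∧
      T₀.Countable ∧ Set.range g ⊆ T₀ ∧
      ∀ x : ℝ, ∃ δ : ℝ, 0 < δ ∧
        {s : ℝ | @dist T m.toDist (g (x - s)) (g (x + s)) < δ}.Finite := by
  let B := Module.Basis.ofVectorSpace ℚ ℝ
  obtain ⟨c, hc⟩ := Real.exists_injective_nat_bool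
  obtain ⟨m, hcompact, hdist⟩ := PiNat.exists_compactSpace_metricSpace (E := Layer)
  refine ⟨_, m, {x | ∀ᶠ i in Filter.atTop, x i = fun _ => none},
    fun t => code (c ∘ (↑)) (B.repr t), hcompact, Set.countable_setOf_eventually_eq _, ?_,
    fun x => ?_⟩
  · rintro _ ⟨t, rfl⟩
    exact eventually_code_eq_none _
  refine ⟨(1 / 2) ^ level (c ∘ (↑)) (B.repr (x + x)), by positivity, ?_⟩
  have hinj : Function.Injective fun s => B.repr (x - s) := fun s s' h => by
    simpa using B.repr.injective h
  have hfin := finite_setOf_code_eq (hc.comp Subtype.val_injective) (B.repr (x + x))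
  refine (hfin.preimage hinj.injOn).subset fun s hs i hi => ?_
  rw [← map_sub, show x + x - (x - s) = x + s by ring]
  exact hdist _ _ _ hs i hi
end
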